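/- Let B > 0 and c > 0, and let X, X' be independent random variables, each uniformly distributed on the interval [-B, B]. Then E[ exp( -c² (X - X')² / 4 ) ] = φ(cB). -/

import Mathlib

/-!
Write `g(u) = exp(-c²u²/4)`. By independence the expectation is `(2B)⁻²` times the integral of
`g(x - y)` over the square `[-B, B]²`. Since `g` is even, that integral equals
`2 ∫₀^{2B} (2B - u) g(u) du`, the weight `2B - u` being the length of the set of pairs with
`|x - y| = u`. The term `∫₀^{2B} g` is a Gaussian integral, hence a value of `Q`, and
`∫₀^{2B} u g(u) du` is elementary.
-/

open MeasureTheory Real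

/-- The Gaussian Q-function. -/
noncomputable def Qfun (t : ℝ) : ℝ :=
  ∫ s in Set.Ioi t, (2 * π) ^ (-(1 : ℝ) / 2) * Real.exp (-s ^ 2 / 2)

/-- The function `φ(x) = (1/x²)(e^{-x²} - 1 + √π x (1 - 2Q(√2 x)))`. -/
noncomputable def phi (x : ℝ) : ℝ :=
  (1 / x ^ 2) * (Real.exp (-x ^ 2) - 1 + Real.sqrt π * x * (1 - 2 * Qfun (Real.sqrt 2 * x)))

lemma integral_exp_neg_sq_div_two (T : ℝ) :
    ∫ s in (0 : ℝ)..T, exp (-s ^ 2 / 2) = √(2 * π) / 2 * (1 - 2 * Qfun T) := by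
  have hform : ∀ s : ℝ, exp (-s ^ 2 / 2) = exp (-(1 / 2) * s ^ 2) := fun s => by ring_nf
  have hint : Integrable (fun s : ℝ => exp (-s ^ 2 / 2)) := by
    simpa only [hform] using integrable_exp_neg_mul_sq (b := 1 / 2) (by norm_num)
  have hhalf : ∫ s in Set.Ioi (0 : ℝ), exp (-s ^ 2 / 2) = √(2 * π) / 2 := by
    simpa only [hform, div_div_eq_mul_div, div_one, mul_comm π] using integral_gaussian_Ioi (1 / 2)
  have hQ : Qfun T = (√(2 * π))⁻¹ * ∫ s in Set.Ioi T, exp (-s ^ 2 / 2) := by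
    rw [Qfun, MeasureTheory.integral_const_mul, sqrt_eq_rpow, ← rpow_neg (by positivity)]
    norm_num
  have hsplit := intervalIntegral.integral_interval_add_Ioi (a := 0) (b := T)
    hint.integrableOn hint.integrableOn
  rw [hhalf] at hsplit
  rw [hQ]
  field_simp
  simp only [neg_div] at hsplit ⊢
  linarith

lemma integral_exp_neg_mul_sq_div_four {c : ℝ} (hc : c ≠ 0) (T : ℝ) :
    ∫ u in (0 : ℝ)..T, exp (-(c ^ 2 * u ^ 2) / 4)
      = √π / c * (1 - 2 * Qfun (c / √2 * T)) := by
  have hsqrt2 : √2 ^ 2 = 2 := sq_sqrt zero_le_two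
  have hscale (u : ℝ) : exp (-(c ^ 2 * u ^ 2) / 4) = exp (-(c / √2 * u) ^ 2 / 2) := by
    rw [mul_pow, div_pow, hsqrt2]
    ring_nf
  simp only [hscale]
  rw [intervalIntegral.integral_comp_mul_left (fun s => exp (-s ^ 2 / 2)) (by positivity), mul_zero,
    integral_exp_neg_sq_div_two, smul_eq_mul, sqrt_mul zero_le_two]
  field_simp
  rw [hsqrt2]

lemma integral_mul_exp_neg_mul_sq_div_four {c : ℝ} (hc : c ≠ 0) (T : ℝ) :
    ∫ u in (0 : ℝ)..T, u * exp (-(c ^ 2 * u ^ 2) / 4)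
      = 2 / c ^ 2 * (1 - exp (-(c ^ 2 * T ^ 2) / 4)) := by
  have hderiv : ∀ u ∈ Set.uIcc 0 T,
      HasDerivAt (fun t => -(2 / c ^ 2) * exp (-(c ^ 2 * t ^ 2) / 4))
      (u * exp (-(c ^ 2 * u ^ 2) / 4)) u := fun u _ => by
    have hquad : HasDerivAt (fun t => -(c ^ 2 * t ^ 2) / 4) (-(c ^ 2 * u) / 2) u :=
      (((hasDerivAt_pow 2 u).const_mul (c ^ 2)).fun_neg.div_const 4).congr_deriv (by ring)
    exact (hquad.exp.const_mul (-(2 / c ^ 2))).congr_deriv (by field_simp)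
  rw [intervalIntegral.integral_eq_sub_of_hasDerivAt hderiv
    ((by fun_prop : Continuous fun u : ℝ => u * exp (-(c ^ 2 * u ^ 2) / 4)).intervalIntegrable
      _ _)]
  simp only [ne_eq, OfNat.ofNat_ne_zero, not_false_eq_true, zero_pow, mul_zero, neg_zero, zero_div,
    exp_zero]
  ring

lemma integral_integral_eq_integral_sub_mul {g : ℝ → ℝ} (hg : Continuous g) (L : ℝ) :
    ∫ t in (0 : ℝ)..L, ∫ u in (0 : ℝ)..t, g u = ∫ u in (0 : ℝ)..L, (L - u) * g u := by
  -- integration by parts against `t - L`, whose boundary terms vanish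
  have hparts := intervalIntegral.integral_mul_deriv_eq_deriv_mul (a := 0) (b := L)
    (v := fun t => t - L)
    (fun t _ => (hg.integral_hasStrictDerivAt 0 t).hasDerivAt)
    (fun t _ => (hasDerivAt_id t).sub_const L) (hg.intervalIntegrable 0 L) intervalIntegrable_const
  simp only [mul_one, sub_self, mul_zero, intervalIntegral.integral_same, zero_sub, zero_mul]
    at hparts
  rw [hparts, ← intervalIntegral.integral_neg]
  congr 1 with u
  ring

lemma integral_integral_comp_sub_of_even {g : ℝ → ℝ} (hg : Continuous g)
    (heven : ∀ u, g (-u) = g u) (a b : ℝ) :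
    ∫ x in a..b, ∫ y in a..b, g (x - y)
      = 2 * ∫ u in (0 : ℝ)..(b - a), (b - a - u) * g u := by
  set F : ℝ → ℝ := fun t => ∫ u in (0 : ℝ)..t, g u
  have hF : Continuous F :=
    intervalIntegral.continuous_primitive (fun _ _ => hg.intervalIntegrable _ _) 0
  have hFodd : ∀ t, F (-t) = -F t := fun t => by
    have hrefl := intervalIntegral.integral_comp_neg (a := 0) (b := t) g
    simp only [heven, neg_zero] at hrefl
    simp only [F]
    rw [intervalIntegral.integral_symm, hrefl]
  have hinner : ∀ x, ∫ y in a..b, g (x - y) = F (x - a) - F (x - b) := fun x => by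
    rw [intervalIntegral.integral_comp_sub_left,
      intervalIntegral.integral_interval_sub_left (hg.intervalIntegrable _ _)
        (hg.intervalIntegrable _ _)]
  have hright : ∫ x in a..b, F (x - a) = ∫ t in (0 : ℝ)..(b - a), F t := by
    rw [intervalIntegral.integral_comp_sub_right, sub_self]
  have hleft : ∫ x in a..b, F (x - b) = -∫ t in (0 : ℝ)..(b - a), F t := by
    have hrefl := intervalIntegral.integral_comp_neg (a := 0) (b := b - a) F
    rw [neg_zero, neg_sub] at hrefl
    rw [intervalIntegral.integral_comp_sub_right, sub_self, ← hrefl,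
      ← intervalIntegral.integral_neg]
    simp only [hFodd]
  simp only [hinner]
  rw [intervalIntegral.integral_sub
    ((by fun_prop : Continuous fun x => F (x - a)).intervalIntegrable _ _)
    ((by fun_prop : Continuous fun x => F (x - b)).intervalIntegrable _ _),
    hright, hleft, integral_integral_eq_integral_sub_mul hg]
  ring

lemma integral_integral_exp_neg_mul_sq_sub {c : ℝ} (hc : c ≠ 0) (B : ℝ) :
    ∫ x in -B..B, ∫ y in -B..B, exp (-(c ^ 2 * (x - y) ^ 2) / 4)
      = 2 * (2 * B * (√π / c * (1 - 2 * Qfun (√2 * (c * B))))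
        - 2 / c ^ 2 * (1 - exp (-(c * B) ^ 2))) := by
  set g : ℝ → ℝ := fun u => exp (-(c ^ 2 * u ^ 2) / 4)
  have hg : Continuous g := by fun_prop
  have hsplit : ∫ u in (0 : ℝ)..(2 * B), (2 * B - u) * g u
      = 2 * B * (∫ u in (0 : ℝ)..(2 * B), g u) - ∫ u in (0 : ℝ)..(2 * B), u * g u := by
    simp only [sub_mul]
    rw [intervalIntegral.integral_sub ((hg.const_mul _).intervalIntegrable _ _)
      ((by fun_prop : Continuous fun u => u * g u).intervalIntegrable _ _),
      intervalIntegral.integral_const_mul]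
  have hQarg : c / √2 * (2 * B) = √2 * (c * B) := by
    field_simp
    rw [sq_sqrt zero_le_two]
  rw [integral_integral_comp_sub_of_even hg (fun u => by simp [g]), show B - -B = 2 * B by ring,
    hsplit, show ∫ u in (0 : ℝ)..(2 * B), g u = _ from integral_exp_neg_mul_sq_div_four hc _,
    show ∫ u in (0 : ℝ)..(2 * B), u * g u = _ from integral_mul_exp_neg_mul_sq_div_four hc _,
    hQarg]
  ring_nf

lemma integral_smul_restrict_Icc {a b : ℝ} (hab : a ≤ b) (h : ℝ → ℝ) :
    ∫ x, h x ∂((ENNReal.ofReal (b - a))⁻¹ • volume.restrict (Set.Icc a b))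
      = (b - a)⁻¹ * ∫ x in a..b, h x := by
  rw [MeasureTheory.integral_smul_measure, ENNReal.toReal_inv,
    ENNReal.toReal_ofReal (sub_nonneg.2 hab), smul_eq_mul, integral_Icc_eq_integral_Ioc,
    intervalIntegral.integral_of_le hab]

lemma ProbabilityTheory.IndepFun.integral_comp_eq_integral_integral {Ω α β : Type*}
    [MeasurableSpace Ω] [MeasurableSpace α] [MeasurableSpace β]
    {P : Measure Ω} [IsFiniteMeasure P]
    {X : Ω → α} {Y : Ω → β} (hX : Measurable X) (hY : Measurable Y)
    (hXY : ProbabilityTheory.IndepFun X Y P) {f : α × β → ℝ}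
    (hf : Integrable f ((P.map X).prod (P.map Y))) :
    ∫ ω, f (X ω, Y ω) ∂P = ∫ x, ∫ y, f (x, y) ∂P.map Y ∂P.map X := by
  have hmap := hXY.map_prod_eq_prod_map_map hX.aemeasurable hY.aemeasurable
  rw [← integral_prod f hf, ← hmap,
    integral_map (hX.prodMk hY).aemeasurable (hmap ▸ hf.aestronglyMeasurable)]

/-- If `X, X'` are independent random variables, each uniform on `[-B, B]`, then
`E[exp(-c²(X-X')²/4)] = φ(cB)`. -/
theorem stmt10 {Ω : Type*} [MeasurableSpace Ω] (ℙ : Measure Ω) [IsProbabilityMeasure ℙ]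
    (B c : ℝ) (hB : 0 < B) (hc : 0 < c)
    (X X' : Ω → ℝ) (hmX : Measurable X) (hmX' : Measurable X')
    (hindep : ProbabilityTheory.IndepFun X X' ℙ)
    (hX : Measure.map X ℙ = (ENNReal.ofReal (2 * B))⁻¹ • volume.restrict (Set.Icc (-B) B))
    (hX' : Measure.map X' ℙ = (ENNReal.ofReal (2 * B))⁻¹ • volume.restrict (Set.Icc (-B) B)) :
    ∫ ω, Real.exp (-(c ^ 2 * (X ω - X' ω) ^ 2) / 4) ∂ℙ = phi (c * B) := by
  have hbound : ∀ p : ℝ × ℝ, ‖exp (-(c ^ 2 * (p.1 - p.2) ^ 2) / 4)‖ ≤ 1 := fun p => by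
    rw [norm_of_nonneg (exp_pos _).le, exp_le_one_iff, neg_div, neg_nonpos]
    positivity
  have hint : Integrable (fun p : ℝ × ℝ => exp (-(c ^ 2 * (p.1 - p.2) ^ 2) / 4))
      ((ℙ.map X).prod (ℙ.map X')) :=
    Integrable.of_bound (by fun_prop : Continuous _).aestronglyMeasurable 1 (ae_of_all _ hbound)
  have huniform : ∀ h : ℝ → ℝ, ∫ x, h x ∂((ENNReal.ofReal (2 * B))⁻¹ •
      volume.restrict (Set.Icc (-B) B)) = (2 * B)⁻¹ * ∫ x in -B..B, h x := fun h => by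
    simpa only [sub_neg_eq_add, ← two_mul] using integral_smul_restrict_Icc (neg_le_self hB.le) h
  rw [hindep.integral_comp_eq_integral_integral hmX hmX' hint, hX, hX']
  simp only [huniform]
  rw [intervalIntegral.integral_const_mul, integral_integral_exp_neg_mul_sq_sub hc.ne', phi]
  field_simp
  ring
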